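/- arXiv:2303.11474 — 4 statements merged into one kernel-verified Lean document; each statement's English description precedes it below -/
import Mathlib

section
/- For a linear map A : ℝ^p → ℝ^q, the Rabier number ν(A) := inf over unit vectors φ ∈ ℝ^q of ‖A*φ‖ (where A* is the adjoint) equals the supremum of all r > 0 such that the closed ball of radius r in ℝ^q is contained in the image under A of the closed unit ball of ℝ^p (with the convention that this supremum is 0 if no such r exists). -/
open Metric ContinuousLinearMap InnerProductSpace


/-- The Rabier number of a continuous linear map into a Euclidean space:
`ν(A) = inf_{‖φ‖=1} ‖A*φ‖`. -/
noncomputable def rabierNu {E : Type*} [NormedAddCommGroup E] [InnerProductSpace ℝ E]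
    [CompleteSpace E] {q : ℕ} (A : E →L[ℝ] EuclideanSpace ℝ (Fin q)) : ℝ :=
  sInf {r : ℝ | ∃ φ : EuclideanSpace ℝ (Fin q), ‖φ‖ = 1 ∧ r = ‖ContinuousLinearMap.adjoint A φ‖}

-- ν ≤ ‖A* u‖ for unit u
lemma rabierNu_le {E : Type*} [NormedAddCommGroup E] [InnerProductSpace ℝ E]
    [CompleteSpace E] {q : ℕ} (A : E →L[ℝ] EuclideanSpace ℝ (Fin q))
    {u : EuclideanSpace ℝ (Fin q)} (hu : ‖u‖ = 1) :
    rabierNu A ≤ ‖ContinuousLinearMap.adjoint A u‖ :=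
  csInf_le ⟨0, by rintro x ⟨φ, h1, rfl⟩; exact norm_nonneg _⟩ ⟨u, hu, rfl⟩

lemma rabierNu_nonneg {E : Type*} [NormedAddCommGroup E] [InnerProductSpace ℝ E]
    [CompleteSpace E] {q : ℕ} (A : E →L[ℝ] EuclideanSpace ℝ (Fin q)) :
    0 ≤ rabierNu A :=
  Real.sInf_nonneg (by rintro x ⟨φ, h1, rfl⟩; exact norm_nonneg _)

-- hard direction
lemma ball_subset_of_le (p q : ℕ)
    (A : EuclideanSpace ℝ (Fin p) →L[ℝ] EuclideanSpace ℝ (Fin q))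
    {r : ℝ} (hr : 0 < r) (hrν : r ≤ rabierNu A) :
    closedBall (0 : EuclideanSpace ℝ (Fin q)) r ⊆ A '' closedBall 0 1 := by
  set K := A '' closedBall (0 : EuclideanSpace ℝ (Fin p)) 1 with hK
  have hKc : IsCompact K := (isCompact_closedBall _ _).image A.continuous
  have hKconv : Convex ℝ K := (convex_closedBall _ _).linear_image A.toLinearMap
  have h0K : (0 : EuclideanSpace ℝ (Fin q)) ∈ K :=
    ⟨0, mem_closedBall_self zero_le_one, map_zero A⟩
  intro y hy
  by_contra hyK
  obtain ⟨f, u, hfu, huy⟩ :=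
    geometric_hahn_banach_closed_point hKconv hKc.isClosed hyK
  set φ := (toDual ℝ (EuclideanSpace ℝ (Fin q))).symm f with hφdef
  have hφ : ∀ x, ⟪φ, x⟫_ℝ = f x := fun x => toDual_symm_apply
  have hu0 : 0 < u := by simpa [map_zero] using hfu 0 h0K
  have hφne : φ ≠ 0 := by
    intro h
    have := hφ y
    rw [h, inner_zero_left] at this
    linarith [huy]
  have hφpos : 0 < ‖φ‖ := norm_pos_iff.mpr hφne
  -- ν ≤ ‖A*φ‖ / ‖φ‖
  have hν : rabierNu A * ‖φ‖ ≤ ‖ContinuousLinearMap.adjoint A φ‖ := by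
    have h1 : ‖(‖φ‖⁻¹ • φ : EuclideanSpace ℝ (Fin q))‖ = 1 := by
      simp [norm_smul, abs_of_pos (inv_pos.mpr hφpos), inv_mul_cancel₀ hφpos.ne']
    have := rabierNu_le A h1
    rw [map_smul, norm_smul, norm_inv, norm_norm] at this
    calc rabierNu A * ‖φ‖ ≤ (‖φ‖⁻¹ * ‖ContinuousLinearMap.adjoint A φ‖) * ‖φ‖ := by
          exact mul_le_mul_of_nonneg_right this hφpos.le
      _ = ‖ContinuousLinearMap.adjoint A φ‖ := by field_simp
  -- ‖A*φ‖ is attained as f (A x) for some x in unit ball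
  have hAφpos : 0 < ‖ContinuousLinearMap.adjoint A φ‖ :=
    lt_of_lt_of_le (mul_pos hr hφpos) (le_trans (mul_le_mul_of_nonneg_right hrν hφpos.le) hν)
  set x := ‖ContinuousLinearMap.adjoint A φ‖⁻¹ • ContinuousLinearMap.adjoint A φ with hxdef
  have hx1 : ‖x‖ ≤ 1 := by
    simp [hxdef, norm_smul, abs_of_pos (inv_pos.mpr hAφpos), inv_mul_cancel₀ hAφpos.ne']
  have hfx : f (A x) = ‖ContinuousLinearMap.adjoint A φ‖ := by
    rw [← hφ, ← ContinuousLinearMap.adjoint_inner_left]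
    rw [hxdef, real_inner_smul_right, real_inner_self_eq_norm_sq]
    field_simp
  have h1 : ‖ContinuousLinearMap.adjoint A φ‖ < u := hfx ▸ hfu (A x) ⟨x, mem_closedBall_zero_iff.mpr hx1, rfl⟩
  have h2 : u < f y := huy
  have h3 : f y ≤ ‖φ‖ * ‖y‖ := by
    rw [← hφ]; exact real_inner_le_norm φ y
  have h4 : ‖y‖ ≤ r := by simpa using hy
  have : ‖ContinuousLinearMap.adjoint A φ‖ < ‖φ‖ * r := by
    calc ‖ContinuousLinearMap.adjoint A φ‖ < u := h1
      _ < f y := h2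
      _ ≤ ‖φ‖ * ‖y‖ := h3
      _ ≤ ‖φ‖ * r := mul_le_mul_of_nonneg_left h4 hφpos.le
  nlinarith

lemma le_rabierNu_of_subset (p q : ℕ) (hq : 0 < q)
    (A : EuclideanSpace ℝ (Fin p) →L[ℝ] EuclideanSpace ℝ (Fin q))
    {r : ℝ} (hr : 0 < r)
    (hsub : closedBall (0 : EuclideanSpace ℝ (Fin q)) r ⊆ A '' closedBall 0 1) :
    r ≤ rabierNu A := by
  haveI : Nontrivial (EuclideanSpace ℝ (Fin q)) :=
    ⟨⟨EuclideanSpace.single ⟨0, hq⟩ 1, 0, by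
      intro h
      have h2 := congrArg norm h
      rw [EuclideanSpace.norm_single, norm_zero] at h2
      norm_num at h2⟩⟩
  have hne : {s : ℝ | ∃ φ : EuclideanSpace ℝ (Fin q), ‖φ‖ = 1 ∧
      s = ‖ContinuousLinearMap.adjoint A φ‖}.Nonempty := by
    obtain ⟨φ, hφ⟩ := (NormedSpace.sphere_nonempty (x := (0 : EuclideanSpace ℝ (Fin q))) (r := 1)).mpr zero_le_one
    exact ⟨‖ContinuousLinearMap.adjoint A φ‖, φ, mem_sphere_zero_iff_norm.mp hφ, rfl⟩
  refine le_csInf hne ?_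
  rintro s ⟨φ, hφ, rfl⟩
  have hmem : (r • φ : EuclideanSpace ℝ (Fin q)) ∈ closedBall (0:EuclideanSpace ℝ (Fin q)) r := by
    simp [norm_smul, hφ, abs_of_pos hr]
  obtain ⟨x, hx, hAx⟩ := hsub hmem
  rw [mem_closedBall_zero_iff] at hx
  have h1 : r = ⟪A x, φ⟫_ℝ := by
    rw [hAx, real_inner_smul_left, real_inner_self_eq_norm_sq, hφ]; ring
  have h2 : ⟪A x, φ⟫_ℝ = ⟪ContinuousLinearMap.adjoint A φ, x⟫_ℝ := by
    rw [ContinuousLinearMap.adjoint_inner_left, real_inner_comm]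
  calc r = ⟪ContinuousLinearMap.adjoint A φ, x⟫_ℝ := by rw [h1, h2]
    _ ≤ ‖ContinuousLinearMap.adjoint A φ‖ * ‖x‖ := real_inner_le_norm _ _
    _ ≤ ‖ContinuousLinearMap.adjoint A φ‖ * 1 := by
        exact mul_le_mul_of_nonneg_left hx (norm_nonneg _)
    _ = _ := mul_one _

/-- The Rabier number equals the supremum of all `r > 0` such that the closed ball of
radius `r` is contained in the image of the closed unit ball (with the convention that
the supremum is `0` when no such `r` exists). -/
theorem rabierNu_eq_sSup_radii (p q : ℕ)
    (A : EuclideanSpace ℝ (Fin p) →L[ℝ] EuclideanSpace ℝ (Fin q)) :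
    rabierNu A =
      sSup (insert (0 : ℝ)
        {r : ℝ | 0 < r ∧ Metric.closedBall (0 : EuclideanSpace ℝ (Fin q)) r ⊆
          A '' Metric.closedBall (0 : EuclideanSpace ℝ (Fin p)) 1}) := by
  rcases Nat.eq_zero_or_pos q with rfl | hq
  · haveI : Subsingleton (EuclideanSpace ℝ (Fin 0)) :=
      ⟨fun a b => PiLp.ext fun i => i.elim0⟩
    have hL : rabierNu A = 0 := by
      have : {r : ℝ | ∃ φ : EuclideanSpace ℝ (Fin 0), ‖φ‖ = 1 ∧
          r = ‖ContinuousLinearMap.adjoint A φ‖} = ∅ := by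
        ext r
        simp only [Set.mem_setOf_eq, Set.mem_empty_iff_false, iff_false]
        rintro ⟨φ, hφ, -⟩
        rw [Subsingleton.elim φ 0] at hφ
        simp at hφ
      rw [rabierNu, this, Real.sInf_empty]
    have hR : ¬ BddAbove (insert (0 : ℝ)
        {r : ℝ | 0 < r ∧ Metric.closedBall (0 : EuclideanSpace ℝ (Fin 0)) r ⊆
          A '' Metric.closedBall (0 : EuclideanSpace ℝ (Fin p)) 1}) := by
      rintro ⟨b, hb⟩
      have : max b 0 + 1 ≤ b := hb (Set.mem_insert_iff.mpr (Or.inr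
        ⟨by positivity, fun y _ => ⟨0, mem_closedBall_self zero_le_one,
          by rw [map_zero]; exact Subsingleton.elim _ _⟩⟩))
      have := le_max_left b 0
      linarith
    rw [hL, Real.sSup_of_not_bddAbove hR]
  · symm
    apply IsGreatest.csSup_eq
    constructor
    · rcases eq_or_lt_of_le (rabierNu_nonneg A) with h | h
      · exact Set.mem_insert_iff.mpr (Or.inl h.symm)
      · exact Set.mem_insert_iff.mpr (Or.inr ⟨h, ball_subset_of_le p q A h le_rfl⟩)
    · rintro x (rfl | ⟨hx, hsub⟩)
      · exact rabierNu_nonneg A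
      · exact le_rabierNu_of_subset p q hq A hx hsub
end

section
/- For a linear map A : ℝ^p → ℝ^q, the Rabier number ν(A) = inf_{‖φ‖=1} ‖A*φ‖ equals the distance (in operator/Euclidean norm on the space of linear maps) from A to the set Σ(p,q) of linear maps ℝ^p → ℝ^q that are not surjective. -/
open ContinuousLinearMap Metric RealInnerProductSpace

/-- The Rabier number of `A` equals the distance (in operator norm) from `A` to the
set `Σ(p,q)` of non-surjective linear maps. -/
theorem rabierNu_eq_dist_nonsurjective (p q : ℕ)
    (A : EuclideanSpace ℝ (Fin p) →L[ℝ] EuclideanSpace ℝ (Fin q)) :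
    rabierNu A =
      Metric.infDist A
        {B : EuclideanSpace ℝ (Fin p) →L[ℝ] EuclideanSpace ℝ (Fin q) |
          ¬ Function.Surjective B} := by
  by_cases hq : q = 0
  · subst hq
    have hSig : {B : EuclideanSpace ℝ (Fin p) →L[ℝ] EuclideanSpace ℝ (Fin 0) |
        ¬ Function.Surjective B} = ∅ := by
      ext B
      simp only [Set.mem_setOf_eq, Set.mem_empty_iff_false, iff_false, not_not]
      intro y
      exact ⟨0, Subsingleton.elim _ _⟩
    have hS : {r : ℝ | ∃ φ : EuclideanSpace ℝ (Fin 0), ‖φ‖ = 1 ∧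
        r = ‖ContinuousLinearMap.adjoint A φ‖} = ∅ := by
      ext r
      simp only [Set.mem_setOf_eq, Set.mem_empty_iff_false, iff_false, not_exists]
      rintro φ ⟨h1, -⟩
      have : φ = 0 := Subsingleton.elim _ _
      rw [this, norm_zero] at h1
      norm_num at h1
    rw [rabierNu, hS, hSig, Real.sInf_empty, Metric.infDist_empty]
  · -- main case q ≥ 1
    have hq' : 0 < q := Nat.pos_of_ne_zero hq
    haveI : Nonempty (Fin q) := ⟨⟨0, hq'⟩⟩
    set S := {r : ℝ | ∃ φ : EuclideanSpace ℝ (Fin q), ‖φ‖ = 1 ∧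
        r = ‖ContinuousLinearMap.adjoint A φ‖} with hSdef
    -- a unit vector exists
    obtain ⟨e, he⟩ : ∃ e : EuclideanSpace ℝ (Fin q), ‖e‖ = 1 :=
      ⟨EuclideanSpace.single ⟨0, hq'⟩ (1:ℝ), by simp [EuclideanSpace.norm_single]⟩
    -- minimize ‖A* φ‖ on the unit sphere
    have hcont : Continuous fun φ : EuclideanSpace ℝ (Fin q) =>
        ‖ContinuousLinearMap.adjoint A φ‖ :=
      (ContinuousLinearMap.adjoint A).continuous.norm
    have hsph : (Metric.sphere (0 : EuclideanSpace ℝ (Fin q)) 1).Nonempty :=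
      ⟨e, by simpa [mem_sphere_zero_iff_norm] using he⟩
    obtain ⟨φ₀, hφ₀mem, hmin⟩ :=
      (isCompact_sphere (0 : EuclideanSpace ℝ (Fin q)) 1).exists_isMinOn hsph
        hcont.continuousOn
    have hφ₀ : ‖φ₀‖ = 1 := mem_sphere_zero_iff_norm.mp hφ₀mem
    set ν := ‖ContinuousLinearMap.adjoint A φ₀‖ with hνdef
    have hmem : ν ∈ S := ⟨φ₀, hφ₀, rfl⟩
    have hlb : ∀ r ∈ S, ν ≤ r := by
      rintro r ⟨φ, hφ, rfl⟩
      exact hmin (mem_sphere_zero_iff_norm.mpr hφ)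
    have hSinf : rabierNu A = ν := by
      refine le_antisymm (csInf_le ⟨ν, hlb⟩ hmem) (le_csInf ⟨ν, hmem⟩ hlb)
    rw [hSinf]
    -- the set Σ is nonempty (the zero map is not surjective)
    have hzero : ¬ Function.Surjective
        (0 : EuclideanSpace ℝ (Fin p) →L[ℝ] EuclideanSpace ℝ (Fin q)) := by
      intro h
      obtain ⟨x, hx⟩ := h e
      simp only [ContinuousLinearMap.zero_apply] at hx
      rw [← hx, norm_zero] at he
      norm_num at he
    have hSigne : {B : EuclideanSpace ℝ (Fin p) →L[ℝ] EuclideanSpace ℝ (Fin q) |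
        ¬ Function.Surjective B}.Nonempty := ⟨0, hzero⟩
    refine le_antisymm ?_ ?_
    · -- ν ≤ dist A B for every non-surjective B
      refine le_of_not_gt fun hlt => ?_
      obtain ⟨B, hB, hdlt⟩ := (Metric.infDist_lt_iff hSigne).mp hlt
      refine absurd hdlt (not_lt.mpr ?_)
      -- find a unit vector orthogonal to the range of B
      have hrange : LinearMap.range (B : EuclideanSpace ℝ (Fin p) →ₗ[ℝ] EuclideanSpace ℝ (Fin q)) ≠ ⊤ := by
        intro h
        exact hB (LinearMap.range_eq_top.mp h)
      have horth : (LinearMap.range (B : EuclideanSpace ℝ (Fin p) →ₗ[ℝ] EuclideanSpace ℝ (Fin q)))ᗮ ≠ ⊥ := by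
        intro h
        exact hrange (Submodule.orthogonal_eq_bot_iff.mp h)
      obtain ⟨ψ, hψmem, hψne⟩ := Submodule.exists_mem_ne_zero_of_ne_bot horth
      set φ := ‖ψ‖⁻¹ • ψ with hφdef
      have hφnorm : ‖φ‖ = 1 := by
        rw [hφdef, norm_smul, norm_inv, norm_norm]
        field_simp [norm_ne_zero_iff.mpr hψne]
      have hφmem : φ ∈ (LinearMap.range (B : EuclideanSpace ℝ (Fin p) →ₗ[ℝ] EuclideanSpace ℝ (Fin q)))ᗮ :=
        Submodule.smul_mem _ _ hψmem
      have hBadj : ContinuousLinearMap.adjoint B φ = 0 := by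
        have h0 : ⟪ContinuousLinearMap.adjoint B φ,
            ContinuousLinearMap.adjoint B φ⟫ = 0 := by
          rw [ContinuousLinearMap.adjoint_inner_left, real_inner_comm]
          exact hφmem _ (LinearMap.mem_range_self _ _)
        exact inner_self_eq_zero.mp h0
      have h1 : ν ≤ ‖ContinuousLinearMap.adjoint A φ‖ := hlb _ ⟨φ, hφnorm, rfl⟩
      have h2 : ContinuousLinearMap.adjoint A φ =
          ContinuousLinearMap.adjoint (A - B) φ := by
        rw [map_sub, ContinuousLinearMap.sub_apply, hBadj, sub_zero]
      calc ν ≤ ‖ContinuousLinearMap.adjoint A φ‖ := h1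
        _ = ‖ContinuousLinearMap.adjoint (A - B) φ‖ := by rw [h2]
        _ ≤ ‖ContinuousLinearMap.adjoint (A - B)‖ * ‖φ‖ :=
            ContinuousLinearMap.le_opNorm _ _
        _ = ‖A - B‖ := by
            rw [hφnorm, mul_one, LinearIsometryEquiv.norm_map]
        _ = dist A B := (dist_eq_norm A B).symm
    · -- construct a nearby non-surjective map
      set C : EuclideanSpace ℝ (Fin p) →L[ℝ] EuclideanSpace ℝ (Fin q) :=
        (innerSL ℝ (ContinuousLinearMap.adjoint A φ₀)).smulRight φ₀ with hCdef
      have hCnorm : ‖C‖ = ν := by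
        rw [hCdef, ContinuousLinearMap.norm_smulRight_apply, innerSL_apply_norm,
          hφ₀, mul_one]
      have hBnot : ¬ Function.Surjective (A - C) := by
        intro h
        obtain ⟨x, hx⟩ := h φ₀
        have hinner : ⟪φ₀, (A - C) x⟫ = 0 := by
          rw [ContinuousLinearMap.sub_apply, inner_sub_right]
          have h1 : ⟪φ₀, A x⟫ = ⟪ContinuousLinearMap.adjoint A φ₀, x⟫ :=
            (ContinuousLinearMap.adjoint_inner_left A x φ₀).symm
          have h2 : ⟪φ₀, C x⟫ = ⟪ContinuousLinearMap.adjoint A φ₀, x⟫ := by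
            rw [hCdef]
            simp only [ContinuousLinearMap.smulRight_apply, innerSL_apply_apply,
              inner_smul_right]
            rw [real_inner_self_eq_norm_sq, hφ₀]
            ring
          rw [h1, h2, sub_self]
        rw [hx, real_inner_self_eq_norm_sq, hφ₀] at hinner
        norm_num at hinner
      calc Metric.infDist A {B : EuclideanSpace ℝ (Fin p) →L[ℝ]
            EuclideanSpace ℝ (Fin q) | ¬ Function.Surjective B}
          ≤ dist A (A - C) := Metric.infDist_le_dist_of_mem hBnot
        _ = ‖C‖ := by rw [dist_eq_norm, sub_sub_cancel]
        _ = ν := hCnorm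
end

section
/- Let A : ℝ^p → ℝ^q be a linear map, let V ⊆ ℝ^p × ℝ^q be the graph of A, and let φ : V → ℝ^q be the restriction to V of the projection onto the second factor. Then ν(φ) = ν(A) / √(1 + ν(A)²). -/
set_option synthInstance.maxHeartbeats 1000000
set_option maxHeartbeats 1000000

/-- The graph `V = {(u, Au)}` of `A`, as a submodule of `ℝ^p × ℝ^q` equipped with the
product (`L²`) Euclidean inner product. -/
noncomputable def graphSubmodule {p q : ℕ}
    (A : EuclideanSpace ℝ (Fin p) →L[ℝ] EuclideanSpace ℝ (Fin q)) :
    Submodule ℝ (WithLp 2 (EuclideanSpace ℝ (Fin p) × EuclideanSpace ℝ (Fin q))) :=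
  Submodule.comap (WithLp.linearEquiv 2 ℝ _).toLinearMap
    (LinearMap.graph (A : EuclideanSpace ℝ (Fin p) →ₗ[ℝ] EuclideanSpace ℝ (Fin q)))

/-- The restriction to the graph of `A` of the projection onto the second factor. -/
noncomputable def graphProj {p q : ℕ}
    (A : EuclideanSpace ℝ (Fin p) →L[ℝ] EuclideanSpace ℝ (Fin q)) :
    graphSubmodule A →L[ℝ] EuclideanSpace ℝ (Fin q) :=
  (ContinuousLinearMap.snd ℝ (EuclideanSpace ℝ (Fin p)) (EuclideanSpace ℝ (Fin q))).comp
    (((WithLp.prodContinuousLinearEquiv 2 ℝ (EuclideanSpace ℝ (Fin p)) (EuclideanSpace ℝ (Fin q))) :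
        WithLp 2 (EuclideanSpace ℝ (Fin p) × EuclideanSpace ℝ (Fin q)) →L[ℝ] _).comp
      (graphSubmodule A).subtypeL)

open ContinuousLinearMap RealInnerProductSpace

variable {p q : ℕ}

local notation "EE" => EuclideanSpace ℝ (Fin p)
local notation "FF" => EuclideanSpace ℝ (Fin q)

-- T = 1 + A A*
noncomputable def opT (A : EE →L[ℝ] FF) : FF →L[ℝ] FF :=
  ContinuousLinearMap.id ℝ _ + A.comp (adjoint A)

lemma opT_apply (A : EE →L[ℝ] FF) (x : FF) : opT A x = x + A (adjoint A x) := rfl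

lemma opT_inner (A : EE →L[ℝ] FF) (x : FF) : ⟪opT A x, x⟫ = ‖x‖^2 + ‖adjoint A x‖^2 := by
  rw [opT_apply, inner_add_left, real_inner_self_eq_norm_sq, ← adjoint_inner_right,
    real_inner_self_eq_norm_sq]

lemma opT_symm (A : EE →L[ℝ] FF) (x y : FF) : ⟪opT A x, y⟫ = ⟪x, opT A y⟫ := by
  simp only [opT_apply, inner_add_left, inner_add_right]
  rw [← adjoint_inner_right, adjoint_inner_left]

lemma opT_bij (A : EE →L[ℝ] FF) : Function.Bijective (opT A) := by
  have hinj : Function.Injective (opT A) := by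
    intro x y hxy
    have h : opT A (x - y) = 0 := by rw [map_sub, hxy, sub_self]
    have h2 : ⟪opT A (x - y), x - y⟫ = 0 := by rw [h, inner_zero_left]
    rw [opT_inner] at h2
    have hx : ‖x - y‖ ^ 2 = 0 := by nlinarith [sq_nonneg ‖adjoint A (x-y)‖, sq_nonneg ‖x - y‖]
    have h3 := pow_eq_zero_iff (n := 2) (by norm_num) |>.mp hx
    rwa [norm_eq_zero, sub_eq_zero] at h3
  exact ⟨hinj, ((opT A : FF →ₗ[ℝ] FF).injective_iff_surjective).mp hinj⟩

noncomputable def opC (A : EE →L[ℝ] FF) : FF →L[ℝ] FF :=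
  LinearMap.toContinuousLinearMap
    (LinearEquiv.ofBijective ((opT A) : FF →ₗ[ℝ] FF) (opT_bij A)).symm.toLinearMap

lemma opC_opT (A : EE →L[ℝ] FF) (x : FF) : opC A (opT A x) = x :=
  (LinearEquiv.ofBijective ((opT A) : FF →ₗ[ℝ] FF) (opT_bij A)).symm_apply_apply x

lemma opT_opC (A : EE →L[ℝ] FF) (x : FF) : opT A (opC A x) = x :=
  (LinearEquiv.ofBijective ((opT A) : FF →ₗ[ℝ] FF) (opT_bij A)).apply_symm_apply x

lemma opC_symm (A : EE →L[ℝ] FF) (x y : FF) : ⟪opC A x, y⟫ = ⟪x, opC A y⟫ :=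
  calc ⟪opC A x, y⟫ = ⟪opC A x, opT A (opC A y)⟫ := by rw [opT_opC]
    _ = ⟪opT A (opC A x), opC A y⟫ := (opT_symm A _ _).symm
    _ = ⟪x, opC A y⟫ := by rw [opT_opC]

lemma opC_inner_nonneg (A : EE →L[ℝ] FF) (x : FF) : 0 ≤ ⟪opC A x, x⟫ := by
  have h := opT_inner A (opC A x)
  rw [opT_opC] at h
  rw [real_inner_comm, h]
  positivity

noncomputable def graphElem (A : EE →L[ℝ] FF) (u : EE) : graphSubmodule A :=
  ⟨(WithLp.equiv 2 _).symm (u, A u), by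
    simp [graphSubmodule, Submodule.mem_comap, LinearMap.mem_graph_iff]⟩

lemma graphElem_surj (A : EE →L[ℝ] FF) (x : graphSubmodule A) : ∃ u, x = graphElem A u := by
  obtain ⟨x, hx⟩ := x
  simp only [graphSubmodule, Submodule.mem_comap, LinearMap.mem_graph_iff] at hx
  have hx' : ((WithLp.equiv 2 (EE × FF)) x).2 = A ((WithLp.equiv 2 (EE × FF)) x).1 := hx
  refine ⟨((WithLp.equiv 2 _) x).1, ?_⟩
  simp only [graphElem, Subtype.mk_eq_mk]
  apply Subtype.ext
  show x = (WithLp.equiv 2 _).symm _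
  apply (WithLp.equiv 2 _).injective
  rw [Equiv.apply_symm_apply]
  exact Prod.ext rfl hx'

lemma graphProj_graphElem (A : EE →L[ℝ] FF) (u : EE) : graphProj A (graphElem A u) = A u := rfl

lemma inner_graphElem (A : EE →L[ℝ] FF) (u v : EE) :
    ⟪graphElem A u, graphElem A v⟫ = ⟪u, v⟫ + ⟪A u, A v⟫ := by
  rw [Submodule.coe_inner, WithLp.prod_inner_apply]
  rfl
lemma adjoint_graphProj (A : EE →L[ℝ] FF) (ψ : FF) :
    adjoint (𝕜 := ℝ) (graphProj A) ψ = graphElem A (adjoint A (opC A ψ)) := by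
  refine ext_inner_right ℝ (y := graphElem A (adjoint A (opC A ψ))) fun v => ?_
  obtain ⟨u, rfl⟩ := graphElem_surj A v
  rw [adjoint_inner_left, graphProj_graphElem, inner_graphElem]
  rw [adjoint_inner_left]
  rw [← inner_add_left, ← opT_apply, opT_opC]

lemma norm_adjoint_graphProj_sq (A : EE →L[ℝ] FF) (ψ : FF) :
    ‖(adjoint (𝕜 := ℝ) (graphProj A) ψ : graphSubmodule A)‖ ^ 2 = ‖ψ‖ ^ 2 - ⟪ψ, opC A ψ⟫ := by
  set c := opC A ψ with hc
  have hAc : A (adjoint A c) = ψ - c := by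
    have := opT_apply A c
    rw [opT_opC] at this
    rw [eq_sub_iff_add_eq, add_comm, ← this]
  rw [adjoint_graphProj, ← real_inner_self_eq_norm_sq, inner_graphElem, hAc]
  have h1 : ⟪adjoint A c, adjoint A c⟫ = ⟪c, ψ - c⟫ := by
    rw [adjoint_inner_left, hAc]
  rw [h1, inner_sub_left, inner_sub_right, inner_sub_right, real_inner_self_eq_norm_sq,
    real_inner_comm c ψ]
  rw [real_inner_self_eq_norm_sq]
  ring

lemma cs_inequality (A : EE →L[ℝ] FF) (ψ : FF) :
    (⟪ψ, ψ⟫ : ℝ) ^ 2 ≤ ⟪opC A ψ, ψ⟫ * ⟪ψ, opT A ψ⟫ := by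
  have key : ∀ t : ℝ, 0 ≤ ⟪ψ, opT A ψ⟫ * (t * t) + (2 * ⟪ψ, ψ⟫) * t + ⟪opC A ψ, ψ⟫ := by
    intro t
    have h := opC_inner_nonneg A (ψ + t • opT A ψ)
    have hCy : ⟪opC A (opT A ψ), opT A ψ⟫ = ⟪ψ, opT A ψ⟫ := by rw [opC_opT]
    have hCxy : (⟪opC A ψ, opT A ψ⟫ : ℝ) = ⟪ψ, ψ⟫ := by
      rw [← opT_symm, opT_opC]
    have hCyx : (⟪opC A (opT A ψ), ψ⟫ : ℝ) = ⟪ψ, ψ⟫ := by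
      rw [opC_symm, real_inner_comm, hCxy]
    simp only [map_add, map_smul, inner_add_left, inner_add_right, inner_smul_left,
      inner_smul_right, RCLike.conj_to_real, hCy, hCxy, hCyx] at h
    nlinarith [h]
  have hd := discrim_le_zero key
  rw [discrim] at hd
  nlinarith [hd]

lemma opC_inner_le (A : EE →L[ℝ] FF) {N : ℝ} (hN0 : 0 ≤ N)
    (hN : ∀ z : FF, N * ‖z‖ ≤ ‖adjoint A z‖) {ψ : FF} (hψ : ‖ψ‖ = 1) :
    ⟪ψ, opC A ψ⟫ ≤ 1 / (1 + N ^ 2) := by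
  have h1 : (⟪ψ, opC A ψ⟫ : ℝ) = ‖opC A ψ‖ ^ 2 + ‖adjoint A (opC A ψ)‖ ^ 2 := by
    have h := opT_inner A (opC A ψ)
    rwa [opT_opC] at h
  have h2 : (⟪ψ, opC A ψ⟫ : ℝ) ≤ ‖opC A ψ‖ := by
    calc (⟪ψ, opC A ψ⟫ : ℝ) ≤ ‖ψ‖ * ‖opC A ψ‖ := real_inner_le_norm _ _
      _ = ‖opC A ψ‖ := by rw [hψ, one_mul]
  have h3 := hN (opC A ψ)
  have he : (0:ℝ) ≤ ‖opC A ψ‖ := norm_nonneg _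
  have hpos : (0:ℝ) < 1 + N ^ 2 := by positivity
  have h4 : (1 + N ^ 2) * ‖opC A ψ‖ ^ 2 ≤ ⟪ψ, opC A ψ⟫ := by
    nlinarith [mul_le_mul h3 h3 (mul_nonneg hN0 he) (norm_nonneg (adjoint A (opC A ψ)))]
  rcases eq_or_lt_of_le he with h | h
  · have : (⟪ψ, opC A ψ⟫ : ℝ) ≤ 0 := by rw [← h] at h2; exact h2
    have h5 : (0:ℝ) < 1 / (1 + N ^ 2) := by positivity
    linarith
  · have h5 : (1 + N ^ 2) * ‖opC A ψ‖ ≤ 1 := by nlinarith [h4.trans h2, h]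
    rw [le_div_iff₀ hpos]
    calc (⟪ψ, opC A ψ⟫ : ℝ) * (1 + N ^ 2) ≤ ‖opC A ψ‖ * (1 + N ^ 2) :=
          mul_le_mul_of_nonneg_right h2 hpos.le
      _ ≤ 1 := by linarith

/-- `ν(φ) = ν(A)/√(1 + ν(A)²)` where `φ` is the projection from the graph of `A` onto
the second factor. -/
theorem rabierNu_graphProj (p q : ℕ)
    (A : EuclideanSpace ℝ (Fin p) →L[ℝ] EuclideanSpace ℝ (Fin q)) :
    rabierNu (E := graphSubmodule A) (graphProj A) =
      rabierNu A / Real.sqrt (1 + rabierNu A ^ 2) := by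
  rcases Nat.eq_zero_or_pos q with hq | hq
  · subst hq
    have hzero : ∀ ψ : EuclideanSpace ℝ (Fin 0), ‖ψ‖ = 0 := fun ψ => by
      simp [EuclideanSpace.norm_eq]
    have he1 : {r : ℝ | ∃ φ : EuclideanSpace ℝ (Fin 0), ‖φ‖ = 1 ∧
        r = ‖(adjoint (𝕜 := ℝ) (graphProj A) φ : graphSubmodule A)‖} = ∅ := by
      ext r
      simp only [Set.mem_setOf_eq, Set.mem_empty_iff_false, iff_false, not_exists]
      rintro φ ⟨hφ, -⟩
      rw [hzero φ] at hφ
      exact one_ne_zero hφ.symm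
    have he2 : {r : ℝ | ∃ φ : EuclideanSpace ℝ (Fin 0), ‖φ‖ = 1 ∧
        r = ‖adjoint A φ‖} = ∅ := by
      ext r
      simp only [Set.mem_setOf_eq, Set.mem_empty_iff_false, iff_false, not_exists]
      rintro φ ⟨hφ, -⟩
      rw [hzero φ] at hφ
      exact one_ne_zero hφ.symm
    rw [rabierNu, rabierNu, he1, he2, Real.sInf_empty]
    norm_num
  · have hcont : Continuous fun ψ : EuclideanSpace ℝ (Fin q) => ‖adjoint A ψ‖ := (adjoint A).continuous.norm
    obtain ⟨ψ₁, hψ₁mem, hmin⟩ := (isCompact_sphere (0:EuclideanSpace ℝ (Fin q)) 1).exists_isMinOn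
      ⟨EuclideanSpace.single ⟨0, hq⟩ (1:ℝ), by
        simp [mem_sphere_zero_iff_norm, EuclideanSpace.norm_single]⟩
      hcont.continuousOn
    rw [mem_sphere_zero_iff_norm] at hψ₁mem
    set N := ‖adjoint A ψ₁‖ with hNdef
    have hN0 : 0 ≤ N := norm_nonneg _
    have hposN : (0:ℝ) < 1 + N ^ 2 := by positivity
    have hrA : rabierNu A = N := by
      apply IsLeast.csInf_eq
      refine ⟨⟨ψ₁, hψ₁mem, rfl⟩, ?_⟩
      rintro r ⟨ψ, hψ, rfl⟩
      exact hmin (mem_sphere_zero_iff_norm.mpr hψ)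
    have hNlow : ∀ z : EuclideanSpace ℝ (Fin q), N * ‖z‖ ≤ ‖adjoint A z‖ := by
      intro z
      rcases eq_or_ne z 0 with rfl | hz
      · simp
      · have hz' : ‖z‖ ≠ 0 := norm_ne_zero_iff.mpr hz
        have hmem : (‖z‖⁻¹ • z) ∈ Metric.sphere (0:EuclideanSpace ℝ (Fin q)) 1 := by
          rw [mem_sphere_zero_iff_norm, norm_smul, norm_inv, norm_norm,
            inv_mul_cancel₀ hz']
        have hle := hmin hmem
        simp only [Set.mem_setOf_eq, map_smul, norm_smul, norm_inv, norm_norm] at hle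
        calc N * ‖z‖ ≤ (‖z‖⁻¹ * ‖adjoint A z‖) * ‖z‖ :=
              mul_le_mul_of_nonneg_right hle (norm_nonneg z)
          _ = ‖adjoint A z‖ := by field_simp
    have hub : ∀ ψ : EuclideanSpace ℝ (Fin q), ‖ψ‖ = 1 → ⟪ψ, opC A ψ⟫ ≤ 1 / (1 + N ^ 2) :=
      fun ψ h => opC_inner_le A hN0 hNlow h
    have hkey : ∀ ψ : EuclideanSpace ℝ (Fin q), ‖ψ‖ = 1 →
        ‖(adjoint (𝕜 := ℝ) (graphProj A) ψ : graphSubmodule A)‖ ^ 2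
          = 1 - ⟪ψ, opC A ψ⟫ := fun ψ h => by
      rw [norm_adjoint_graphProj_sq, h, one_pow]
    have hlb1 : 1 / (1 + N ^ 2) ≤ ⟪ψ₁, opC A ψ₁⟫ := by
      have hcs := cs_inequality A ψ₁
      rw [real_inner_self_eq_norm_sq, hψ₁mem] at hcs
      have hT : (⟪ψ₁, opT A ψ₁⟫ : ℝ) = 1 + N ^ 2 := by
        rw [real_inner_comm, opT_inner, hψ₁mem, one_pow, ← hNdef]
      rw [hT] at hcs
      rw [real_inner_comm, div_le_iff₀ hposN]
      nlinarith [hcs]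
    have heq1 : (⟪ψ₁, opC A ψ₁⟫ : ℝ) = 1 / (1 + N ^ 2) :=
      le_antisymm (hub ψ₁ hψ₁mem) hlb1
    set μ := N / Real.sqrt (1 + N ^ 2) with hμ
    have hμ0 : 0 ≤ μ := by positivity
    have hμsq : μ ^ 2 = 1 - 1 / (1 + N ^ 2) := by
      rw [hμ, div_pow, Real.sq_sqrt hposN.le]
      field_simp
      ring
    have hnorm1 : ‖(adjoint (𝕜 := ℝ) (graphProj A) ψ₁ : graphSubmodule A)‖ = μ := by
      have h := hkey ψ₁ hψ₁mem
      rw [heq1, ← hμsq] at h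
      calc ‖(adjoint (𝕜 := ℝ) (graphProj A) ψ₁ : graphSubmodule A)‖
          = Real.sqrt (‖(adjoint (𝕜 := ℝ) (graphProj A) ψ₁ : graphSubmodule A)‖ ^ 2) :=
            (Real.sqrt_sq (norm_nonneg _)).symm
        _ = Real.sqrt (μ ^ 2) := by rw [h]
        _ = μ := Real.sqrt_sq hμ0
    have hfinal : IsLeast {r : ℝ | ∃ φ : EuclideanSpace ℝ (Fin q), ‖φ‖ = 1 ∧
        r = ‖(adjoint (𝕜 := ℝ) (graphProj A) φ : graphSubmodule A)‖} μ := by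
      refine ⟨⟨ψ₁, hψ₁mem, hnorm1.symm⟩, ?_⟩
      rintro r ⟨ψ, hψ, rfl⟩
      have h := hkey ψ hψ
      have h2 := hub ψ hψ
      have h3 : μ ^ 2 ≤ ‖(adjoint (𝕜 := ℝ) (graphProj A) ψ : graphSubmodule A)‖ ^ 2 := by
        rw [h, hμsq]; linarith
      calc μ = Real.sqrt (μ ^ 2) := (Real.sqrt_sq hμ0).symm
        _ ≤ Real.sqrt (‖(adjoint (𝕜 := ℝ) (graphProj A) ψ : graphSubmodule A)‖ ^ 2) :=
            Real.sqrt_le_sqrt h3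
        _ = _ := Real.sqrt_sq (norm_nonneg _)
    rw [hrA, rabierNu]
    exact hfinal.csInf_eq
end

section
/- Let f : [a, ∞) → (0, ∞) be a C¹ function with f(t) → 0 as t → ∞, and let τ > 0. If the limit L := lim_{t→∞} t^{1+τ} · f'(t)/f(t) exists in the extended reals [-∞, +∞], then L = -∞. -/
open Filter

/-- If `f : [a,∞) → (0,∞)` is `C¹` with `f → 0` at `+∞` and `τ > 0`, and the limit
`L = lim_{t→∞} t^{1+τ} f'(t)/f(t)` exists in the extended reals, then `L = -∞`. -/
theorem lim_rpow_logDeriv_eq_bot (a : ℝ) (ha : 0 < a) (τ : ℝ) (hτ : 0 < τ)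
    (f f' : ℝ → ℝ) (L : EReal)
    (hpos : ∀ t ∈ Set.Ici a, 0 < f t)
    (hderiv : ∀ t ∈ Set.Ici a, HasDerivAt f (f' t) t)
    (hcont : ContinuousOn f' (Set.Ici a))
    (hf0 : Tendsto f atTop (nhds 0))
    (hL : Tendsto (fun t : ℝ => ((t ^ (1 + τ) * f' t / f t : ℝ) : EReal)) atTop (nhds L)) :
    L = ⊥ := by
  by_contra hne
  have hbot : ⊥ < L := bot_lt_iff_ne_bot.mpr hne
  obtain ⟨y, hy1, hy2⟩ := exists_between hbot
  have hyt : y ≠ ⊤ := hy2.ne_top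
  have hyb : y ≠ ⊥ := hy1.ne'
  set r : ℝ := y.toReal with hr
  have hyr : (r : EReal) = y := EReal.coe_toReal hyt hyb
  set M : ℝ := max 1 (-r) with hM
  have hM0 : (0 : ℝ) < M := lt_of_lt_of_le one_pos (le_max_left _ _)
  have hMr : ((-M : ℝ) : EReal) < L := by
    refine lt_of_le_of_lt ?_ (hyr ▸ hy2)
    exact_mod_cast (neg_le.mpr (le_max_right 1 (-r)))
  have hev : ∀ᶠ t in atTop, ((-M : ℝ) : EReal) < ((t ^ (1 + τ) * f' t / f t : ℝ) : EReal) :=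
    hL.eventually_const_lt hMr
  rw [eventually_atTop] at hev
  obtain ⟨T, hT⟩ := hev
  set t₀ : ℝ := max a T with ht₀
  have ht₀a : a ≤ t₀ := le_max_left _ _
  have ht₀0 : 0 < t₀ := lt_of_lt_of_le ha ht₀a
  -- the auxiliary function
  set F : ℝ → ℝ := fun t => Real.log (f t) - (M / τ) * t ^ (-τ) with hF
  -- derivative of F is positive for t > t₀
  have hFderiv : ∀ t, t₀ ≤ t → HasDerivAt F (f' t / f t + M * t ^ (-τ - 1)) t := by
    intro t ht
    have hta : a ≤ t := le_trans ht₀a ht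
    have ht0 : 0 < t := lt_of_lt_of_le ht₀0 ht
    have h1 : HasDerivAt (fun s => Real.log (f s)) (f' t / f t) t :=
      (hderiv t hta).log (ne_of_gt (hpos t hta))
    have h2 : HasDerivAt (fun s : ℝ => s ^ (-τ)) (-τ * t ^ (-τ - 1)) t :=
      Real.hasDerivAt_rpow_const (Or.inl (ne_of_gt ht0))
    have := h1.sub ((h2.const_mul (M / τ)))
    refine this.congr_deriv ?_
    have hτ0 : τ ≠ 0 := ne_of_gt hτ
    field_simp
    ring
  have hFpos : ∀ t, t₀ ≤ t → 0 < f' t / f t + M * t ^ (-τ - 1) := by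
    intro t ht
    have hta : a ≤ t := le_trans ht₀a ht
    have ht0 : 0 < t := lt_of_lt_of_le ht₀0 ht
    have hpow : (0 : ℝ) < t ^ (1 + τ) := Real.rpow_pos_of_pos ht0 _
    have hb : -M < t ^ (1 + τ) * f' t / f t := by
      have := hT t (le_trans (le_max_right a T) ht)
      exact_mod_cast this
    have hneg : t ^ (-τ - 1) = (t ^ (1 + τ))⁻¹ := by
      rw [← Real.rpow_neg (le_of_lt ht0)]
      ring_nf
    rw [hneg]
    have hfpos := hpos t hta
    rw [mul_comm, ← div_eq_inv_mul]
    have hb' : -M * f t < t ^ (1 + τ) * f' t := by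
      rw [lt_div_iff₀ hfpos] at hb; linarith
    have : -(M / t ^ (1 + τ)) < f' t / f t := by
      rw [show -(M / t ^ (1 + τ)) = (-M) / t ^ (1 + τ) from (neg_div _ _).symm,
        div_lt_div_iff₀ hpow hfpos]
      nlinarith
    linarith
  -- F is strictly monotone on [t₀, ∞)
  have hFmono : StrictMonoOn F (Set.Ici t₀) := by
    apply strictMonoOn_of_deriv_pos (convex_Ici t₀)
    · intro t ht
      exact ((hFderiv t ht).continuousAt).continuousWithinAt
    · intro t ht
      rw [interior_Ici] at ht
      rw [(hFderiv t (le_of_lt ht)).deriv]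
      exact hFpos t (le_of_lt ht)
  -- lower bound for f
  have hlow : ∀ t, t₀ ≤ t → Real.exp (F t₀) ≤ f t := by
    intro t ht
    have hta : a ≤ t := le_trans ht₀a ht
    have ht0 : 0 < t := lt_of_lt_of_le ht₀0 ht
    have hFle : F t₀ ≤ F t := by
      rcases eq_or_lt_of_le ht with h | h
      · rw [h]
      · exact le_of_lt (hFmono (Set.self_mem_Ici) (le_of_lt (lt_of_le_of_lt le_rfl h)) h)
    have hx : (0:ℝ) < (M / τ) * t ^ (-τ) :=
      mul_pos (div_pos hM0 hτ) (Real.rpow_pos_of_pos ht0 _)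
    have hlog : F t₀ ≤ Real.log (f t) := by
      refine le_trans hFle ?_
      have : F t = Real.log (f t) - (M / τ) * t ^ (-τ) := rfl
      rw [this]
      linarith
    calc Real.exp (F t₀) ≤ Real.exp (Real.log (f t)) := Real.exp_le_exp.mpr hlog
      _ = f t := Real.exp_log (hpos t hta)
  -- contradiction with f → 0
  have hsmall : ∀ᶠ t in atTop, f t < Real.exp (F t₀) := by
    have := hf0.eventually (eventually_lt_nhds (Real.exp_pos (F t₀)))
    simpa using this
  rw [eventually_atTop] at hsmall
  obtain ⟨T', hT'⟩ := hsmall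
  have := hlow (max t₀ T') (le_max_left _ _)
  have := hT' (max t₀ T') (le_max_right _ _)
  linarith
end
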